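/- arXiv:2107.05958 — 8 statements merged into one kernel-verified Lean document; each statement's English description precedes it below -/
import Mathlib

section
/- Let p ≥ 1 be an integer, H > 0, β ∈ [0,1), x̄ ∈ E, T ∈ s, and let g be a subgradient of ψ at T such that ‖∇f(T) + H‖T − x̄‖^{p−1}(T − x̄) + g‖ ≤ β‖∇f(T) + g‖. Then ⟨∇f(T) + g, x̄ − T⟩ ≥ (H/(1+β))·‖T − x̄‖^{p+1}. -/
/-!
Write `u = ∇f(T) + g`, `r = T - x̄` and `c = H‖r‖^{p-1}`. Squaring `‖u + c r‖ ≤ β‖u‖` gives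
`-2c⟨u, r⟩ ≥ (1 - β²)‖u‖² + c²‖r‖²`, and the triangle inequality gives `c‖r‖ ≤ (1 + β)‖u‖`;
together they yield `-⟨u, r⟩ ≥ c‖r‖² / (1 + β)`.
-/

open scoped RealInnerProductSpace

section InnerProductSpace

variable {E : Type*} [NormedAddCommGroup E] [InnerProductSpace ℝ E]

lemma norm_sq_add_two_mul_inner_add_sq_le {u r : E} {c β : ℝ} (hc : 0 ≤ c)
    (h : ‖u + c • r‖ ≤ β * ‖u‖) :
    ‖u‖ ^ 2 + 2 * (c * ⟪u, r⟫) + (c * ‖r‖) ^ 2 ≤ (β * ‖u‖) ^ 2 := by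
  have hexp : ‖u + c • r‖ ^ 2 = ‖u‖ ^ 2 + 2 * (c * ⟪u, r⟫) + (c * ‖r‖) ^ 2 := by
    rw [norm_add_sq_real, real_inner_smul_right, norm_smul, Real.norm_of_nonneg hc]
  rw [← hexp]
  exact pow_le_pow_left₀ (norm_nonneg _) h 2

lemma mul_norm_le_one_add_mul_norm {u r : E} {c β : ℝ} (hc : 0 ≤ c)
    (h : ‖u + c • r‖ ≤ β * ‖u‖) :
    c * ‖r‖ ≤ (1 + β) * ‖u‖ := by
  have htri : ‖c • r‖ ≤ ‖u + c • r‖ + ‖u‖ := by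
    simpa using norm_sub_le (u + c • r) u
  rw [norm_smul, Real.norm_of_nonneg hc] at htri
  linarith

theorem div_one_add_mul_norm_sq_le_neg_inner {u r : E} {c β : ℝ} (hc : 0 < c)
    (hβ0 : 0 ≤ β) (hβ1 : β ≤ 1) (h : ‖u + c • r‖ ≤ β * ‖u‖) :
    c / (1 + β) * ‖r‖ ^ 2 ≤ -⟪u, r⟫ := by
  have hsq := norm_sq_add_two_mul_inner_add_sq_le hc.le h
  have htri := mul_norm_le_one_add_mul_norm hc.le h
  have hβ : 0 < 1 + β := by linarith
  rw [div_mul_eq_mul_div, div_le_iff₀ hβ]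
  -- Multiply by `2c` and bound `(1 - β²)(1 + β)‖u‖² ≥ (1 - β)(c‖r‖)²`.
  have hcross : (1 - β) * (c * ‖r‖) ^ 2 ≤ (1 - β) * ((1 + β) * ‖u‖) ^ 2 :=
    mul_le_mul_of_nonneg_left
      (pow_le_pow_left₀ (by positivity) htri 2) (by linarith)
  have hkey : 2 * c * (c * ‖r‖ ^ 2) ≤ 2 * c * (-⟪u, r⟫ * (1 + β)) := by
    nlinarith [mul_le_mul_of_nonneg_left hsq hβ.le]
  exact le_of_mul_le_mul_left hkey (by positivity)

end InnerProductSpace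

theorem stmt1_general {E : Type*} [NormedAddCommGroup E] [InnerProductSpace ℝ E]
    (f' : E → E)
    (p : ℕ) (hp : 1 ≤ p) (H : ℝ) (hH : 0 < H)
    (β : ℝ) (hβ : β ∈ Set.Ico (0 : ℝ) 1)
    (xbar T : E) (g : E)
    (hineq : ‖f' T + (H * ‖T - xbar‖ ^ (p - 1)) • (T - xbar) + g‖ ≤ β * ‖f' T + g‖) :
    ⟪f' T + g, xbar - T⟫ ≥ H / (1 + β) * ‖T - xbar‖ ^ (p + 1) := by
  obtain ⟨q, rfl⟩ : ∃ q, p = q + 1 := ⟨p - 1, (Nat.succ_pred_eq_of_pos hp).symm⟩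
  rw [Nat.add_sub_cancel] at hineq
  rw [← neg_sub T xbar, inner_neg_right, ge_iff_le]
  rcases eq_or_ne (T - xbar) 0 with hr | hr
  · simp [hr]
  have hc : 0 < H * ‖T - xbar‖ ^ q := mul_pos hH (pow_pos (norm_pos_iff.mpr hr) q)
  have h : ‖(f' T + g) + (H * ‖T - xbar‖ ^ q) • (T - xbar)‖ ≤ β * ‖f' T + g‖ := by
    rwa [add_right_comm]
  calc H / (1 + β) * ‖T - xbar‖ ^ (q + 1 + 1)
      = H * ‖T - xbar‖ ^ q / (1 + β) * ‖T - xbar‖ ^ 2 := by ring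
    _ ≤ -⟪f' T + g, T - xbar⟫ :=
      div_one_add_mul_norm_sq_le_neg_inner hc hβ.1 hβ.2.le h

theorem stmt1 {E : Type*} [NormedAddCommGroup E] [InnerProductSpace ℝ E]
    [FiniteDimensional ℝ E]
    (s : Set E) (hs : s.Nonempty) (hsconv : Convex ℝ s)
    (ψ : E → ℝ) (hψ : ConvexOn ℝ s ψ)
    (f : E → ℝ) (f' : E → E) (hf' : ∀ x, HasGradientAt f (f' x) x)
    (hfconv : ConvexOn ℝ Set.univ f)
    (p : ℕ) (hp : 1 ≤ p) (H : ℝ) (hH : 0 < H)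
    (β : ℝ) (hβ : β ∈ Set.Ico (0 : ℝ) 1)
    (xbar T : E) (hT : T ∈ s) (g : E)
    (hg : ∀ z ∈ s, ψ z ≥ ψ T + ⟪g, z - T⟫)
    (hineq : ‖f' T + (H * ‖T - xbar‖ ^ (p - 1)) • (T - xbar) + g‖ ≤ β * ‖f' T + g‖) :
    ⟪f' T + g, xbar - T⟫ ≥ H / (1 + β) * ‖T - xbar‖ ^ (p + 1) :=
  stmt1_general f' p hp H hH β hβ xbar T g hineq
end

section
/- Let p ≥ 1 be an integer, H > 0, β ∈ [0, 1/p], x̄ ∈ E, T ∈ s, and let g be a subgradient of ψ at T such that ‖∇f(T) + H‖T − x̄‖^{p−1}(T − x̄) + g‖ ≤ β‖∇f(T) + g‖. Then ⟨∇f(T) + g, x̄ − T⟩ ≥ ((1−β)/H)^{1/p}·‖∇f(T) + g‖^{(p+1)/p}. -/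
open scoped RealInnerProductSpace

/-!
Write `v = ∇f(T) + g`, `d = x̄ - T`, `t = ‖d‖` and `c = H t^(p-1)`, so that the hypothesis reads
`‖v - c d‖ ≤ β ‖v‖`. Expanding the square gives `2 c ⟪v, d⟫ ≥ (1 - β²) ‖v‖² + (H t^p)²`, and the
triangle inequality gives `H t^p ≥ (1 - β) ‖v‖`. With `ρ = ((1 - β) ‖v‖ / H)^(1/p)` the claimed
bound is `ρ ‖v‖`. Bernoulli's inequality `p t^(p-1) ρ ≤ (p - 1) t^p + ρ^p` reduces
`2 c ρ ‖v‖ ≤ (1 - β²) ‖v‖² + (H t^p)²` to a quadratic inequality in `H t^p`, which holds on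
`H t^p ≥ (1 - β) ‖v‖` precisely because `p β ≤ 1`.
-/

lemma natCast_mul_pow_pred_mul_le {t ρ : ℝ} (ht : 0 ≤ t) (hρ : 0 ≤ ρ) {p : ℕ} (hp : 1 ≤ p) :
    p * (t ^ (p - 1) * ρ) ≤ (p - 1) * t ^ p + ρ ^ p := by
  have bernoulli := pow_add_mul_le_add_pow ht (by linarith : 0 ≤ 2 * t + (ρ - t)) p
  have htp : t ^ (p - 1) * t = t ^ p := by rw [← pow_succ, Nat.sub_add_cancel hp]
  rw [add_sub_cancel] at bernoulli
  nlinarith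

lemma two_mul_pow_pred_mul_le {p : ℕ} (hp : 1 ≤ p) {H β V t ρ : ℝ} (hH : 0 ≤ H)
    (hβ : p * β ≤ 1) (hV : 0 ≤ V) (ht : 0 ≤ t) (hρ : 0 ≤ ρ)
    (hρp : H * ρ ^ p = (1 - β) * V) (hle : (1 - β) * V ≤ H * t ^ p) :
    2 * (H * t ^ (p - 1)) * (ρ * V) ≤ (1 - β ^ 2) * V ^ 2 + (H * t ^ p) ^ 2 := by
  have hP : (0 : ℝ) < p := by exact_mod_cast hp
  set b := H * t ^ p
  -- `p * RHS - 2 V ((p - 1) b + (1 - β) V)` is this product; its second factor is `≥ 2 V (1 - p β)`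
  have factor : 0 ≤ (b - (1 - β) * V) * (p * b + p * (1 - β) * V - 2 * (p - 1) * V) := by
    apply mul_nonneg (by linarith)
    nlinarith
  have young := mul_le_mul_of_nonneg_left (natCast_mul_pow_pred_mul_le ht hρ hp)
    (by positivity : 0 ≤ 2 * H * V)
  refine le_of_mul_le_mul_left ?_ hP
  nlinarith

lemma rpow_one_div_mul_rpow_add_one_div {a V P : ℝ} (ha : 0 ≤ a) (hV : 0 ≤ V) (hP : 0 < P) :
    a ^ (1 / P) * V ^ ((P + 1) / P) = (a * V) ^ (1 / P) * V := by
  rw [Real.mul_rpow ha hV, mul_assoc, ← Real.rpow_add_one' hV (by positivity)]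
  congr 2
  field_simp
  ring

section InnerProductSpace

variable {E : Type*} [SeminormedAddCommGroup E] [InnerProductSpace ℝ E]

lemma one_sub_mul_norm_le_norm_smul {v d : E} {c β : ℝ} (h : ‖v - c • d‖ ≤ β * ‖v‖) :
    (1 - β) * ‖v‖ ≤ ‖c • d‖ := by
  linarith [norm_sub_norm_le v (c • d)]

lemma one_sub_sq_mul_sq_add_sq_le_two_mul_inner {v d : E} {c β : ℝ}
    (h : ‖v - c • d‖ ≤ β * ‖v‖) :
    (1 - β ^ 2) * ‖v‖ ^ 2 + ‖c • d‖ ^ 2 ≤ 2 * c * ⟪v, d⟫ := by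
  have hsq : ‖v - c • d‖ ^ 2 ≤ (β * ‖v‖) ^ 2 := pow_le_pow_left₀ (norm_nonneg _) h 2
  rw [norm_sub_sq_real, real_inner_smul_right] at hsq
  nlinarith

end InnerProductSpace

theorem stmt2_general {E : Type*} [NormedAddCommGroup E] [InnerProductSpace ℝ E]
    (f' : E → E)
    (p : ℕ) (hp : 1 ≤ p) (H : ℝ) (hH : 0 < H)
    (β : ℝ) (hβ1 : β ≤ 1 / (p : ℝ))
    (xbar T : E) (g : E)
    (hineq : ‖f' T + (H * ‖T - xbar‖ ^ (p - 1)) • (T - xbar) + g‖ ≤ β * ‖f' T + g‖) :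
    ⟪f' T + g, xbar - T⟫ ≥
      ((1 - β) / H) ^ (1 / (p : ℝ)) * ‖f' T + g‖ ^ (((p : ℝ) + 1) / p) := by
  have hP : (0 : ℝ) < p := by exact_mod_cast hp
  have hpβ : p * β ≤ 1 := by rwa [le_div_iff₀' hP] at hβ1
  have hβ : β ≤ 1 := hβ1.trans (div_le_one_of_le₀ (by exact_mod_cast hp) hP.le)
  set v := f' T + g
  set d := xbar - T
  set t := ‖d‖
  set c := H * t ^ (p - 1)
  have h : ‖v - c • d‖ ≤ β * ‖v‖ := by
    convert hineq using 2
    rw [norm_sub_rev]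
    simp only [v, d, smul_sub]
    abel
  have hnorm : ‖c • d‖ = H * t ^ p := by
    rw [norm_smul, Real.norm_of_nonneg (by positivity), mul_assoc, ← pow_succ,
      Nat.sub_add_cancel hp]
  rw [ge_iff_le, rpow_one_div_mul_rpow_add_one_div (by positivity) (norm_nonneg v) hP]
  set ρ := ((1 - β) / H * ‖v‖) ^ (1 / (p : ℝ)) with hρ_def
  have hρ : 0 ≤ ρ := by positivity
  have hρp : H * ρ ^ p = (1 - β) * ‖v‖ := by
    rw [hρ_def, one_div, Real.rpow_inv_natCast_pow (by positivity) (by omega)]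
    field_simp
  have hle : (1 - β) * ‖v‖ ≤ H * t ^ p := hnorm ▸ one_sub_mul_norm_le_norm_smul h
  rcases eq_or_ne d 0 with hd | hd
  · have hρ0 : ρ ^ p = 0 := by
      simp only [t, hd, norm_zero, zero_pow (by omega : p ≠ 0), mul_zero] at hle
      nlinarith [mul_nonneg hH.le (pow_nonneg hρ p)]
    rw [(pow_eq_zero_iff (by omega)).mp hρ0, zero_mul, hd, inner_zero_right]
  · have hc : 0 < c := by positivity
    refine le_of_mul_le_mul_left ?_ (mul_pos two_pos hc)
    calc 2 * c * (ρ * ‖v‖) ≤ (1 - β ^ 2) * ‖v‖ ^ 2 + (H * t ^ p) ^ 2 :=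
          two_mul_pow_pred_mul_le hp hH.le hpβ (norm_nonneg v) (norm_nonneg d) hρ hρp hle
      _ ≤ 2 * c * ⟪v, d⟫ := hnorm ▸ one_sub_sq_mul_sq_add_sq_le_two_mul_inner h

theorem stmt2 {E : Type*} [NormedAddCommGroup E] [InnerProductSpace ℝ E]
    [FiniteDimensional ℝ E]
    (s : Set E) (hs : s.Nonempty) (hsconv : Convex ℝ s)
    (ψ : E → ℝ) (hψ : ConvexOn ℝ s ψ)
    (f : E → ℝ) (f' : E → E) (hf' : ∀ x, HasGradientAt f (f' x) x)
    (hfconv : ConvexOn ℝ Set.univ f)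
    (p : ℕ) (hp : 1 ≤ p) (H : ℝ) (hH : 0 < H)
    (β : ℝ) (hβ0 : 0 ≤ β) (hβ1 : β ≤ 1 / (p : ℝ))
    (xbar T : E) (hT : T ∈ s) (g : E)
    (hg : ∀ z ∈ s, ψ z ≥ ψ T + ⟪g, z - T⟫)
    (hineq : ‖f' T + (H * ‖T - xbar‖ ^ (p - 1)) • (T - xbar) + g‖ ≤ β * ‖f' T + g‖) :
    ⟪f' T + g, xbar - T⟫ ≥
      ((1 - β) / H) ^ (1 / (p : ℝ)) * ‖f' T + g‖ ^ (((p : ℝ) + 1) / p) :=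
  stmt2_general f' p hp H hH β hβ1 xbar T g hineq
end

section
/- Let α ∈ (0,1] and let (ξ_k)_{k≥0} be a sequence of positive real numbers satisfying ξ_k − ξ_{k+1} ≥ ξ_{k+1}^{1+α} for all k ≥ 0. Then ξ_k ≤ ξ_0 / (1 + (αk/(1+α))·log(1 + ξ_0^α))^{1/α} for all k ≥ 0, and ξ_k ≤ ((1 + 1/α)(1 + ξ_0^α)/k)^{1/α} for all k ≥ 1. -/
/-!
Put `y k = ξ k ^ α`. The recurrence gives `y (k+1) * (1 + y (k+1)) ^ α ≤ y k`, and
`y ↦ y * (1 + y) ^ α` is increasing, so `y` stays below every sequence `b` with `y 0 ≤ b 0` and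
`b k ≤ b (k+1) * (1 + b (k+1)) ^ α`. With `t = ξ 0 ^ α`, the sequence
`b k = t / (1 + α k log (1 + t) / (1 + α))` is such a supersolution: by monotonicity of the
secants `(exp s - 1) / s` this comes down to `(exp u - 1) * (1 + α u) ≤ exp ((1 + α) u) - 1`.
The second bound follows from the first and `t ≤ (1 + t) log (1 + t)`.
-/

open Real Set

lemma exp_sub_one_div_le_exp_sub_one_div {s u : ℝ} (hs : 0 < s) (hsu : s ≤ u) :
    (exp s - 1) / s ≤ (exp u - 1) / u := by
  simpa using convexOn_exp.secant_mono (mem_univ 0) (mem_univ s) (mem_univ u) hs.ne'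
    (hs.trans_le hsu).ne' hsu

lemma exp_sub_one_mul_one_add_mul_le {a s : ℝ} (ha : 0 ≤ a) (hs : 0 ≤ s) :
    (exp s - 1) * (1 + a * s) ≤ exp ((1 + a) * s) - 1 := by
  have h_split : exp ((1 + a) * s) = exp s * exp (a * s) := by rw [← exp_add]; ring_nf
  nlinarith [add_one_le_exp (a * s), one_le_exp hs, one_le_exp (mul_nonneg ha hs)]

lemma exp_div_sub_one_mul_le {a u A : ℝ} (ha : 0 ≤ a) (hu : 0 < u) (hA : 1 ≤ A) :
    (exp (u / A) - 1) * (A + a * u) ≤ exp ((1 + a) * u) - 1 := by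
  have hA0 : 0 < A := one_pos.trans_le hA
  have hs : 0 < u / A := div_pos hu hA0
  have hsu : u / A ≤ u := div_le_self hu.le hA
  have h_secant : (exp (u / A) - 1) * A ≤ exp u - 1 := by
    have := exp_sub_one_div_le_exp_sub_one_div hs hsu
    rwa [div_div_eq_mul_div, div_le_div_iff₀ hu hu, mul_le_mul_iff_of_pos_right hu] at this
  have h_mono : (exp (u / A) - 1) * (a * u) ≤ (exp u - 1) * (a * u) :=
    mul_le_mul_of_nonneg_right (by gcongr) (by positivity)
  nlinarith [exp_sub_one_mul_one_add_mul_le ha hu.le]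

lemma div_le_mul_one_add_rpow {α t A : ℝ} (hα : 0 ≤ α) (ht : 0 < t) (hA : 1 ≤ A) :
    t / A ≤ t / (A + α / (1 + α) * log (1 + t)) *
      (1 + t / (A + α / (1 + α) * log (1 + t))) ^ α := by
  set u := log (1 + t) / (1 + α)
  have hu : 0 < u := div_pos (log_pos (by linarith)) (by linarith)
  have hc : α / (1 + α) * log (1 + t) = α * u := by ring
  rw [hc]
  set w := t / (A + α * u)
  have hA0 : 0 < A := one_pos.trans_le hA
  have hAc : 0 < A + α * u := by positivity
  have h_exp : exp (u / A) ≤ 1 + w := by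
    have h := exp_div_sub_one_mul_le hα hu hA
    rw [mul_div_cancel₀ _ (by linarith : (1 + α) ≠ 0), exp_log (by linarith), add_sub_cancel_left,
      ← le_div_iff₀ hAc] at h
    linarith
  have h_pow : 1 + α * u / A ≤ (1 + w) ^ α := calc
    1 + α * u / A ≤ exp (u / A) ^ α := by
      rw [← exp_mul, show α * u / A = u / A * α by ring]; linarith [add_one_le_exp (u / A * α)]
    _ ≤ (1 + w) ^ α := rpow_le_rpow (exp_pos _).le h_exp hα
  calc t / A = w * (1 + α * u / A) := by simp only [w]; field_simp
    _ ≤ w * (1 + w) ^ α := by gcongr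

theorem StrictMonoOn.le_of_map_succ_le {β : Type*} [LinearOrder β] {φ : β → β} {s : Set β}
    (hφ : StrictMonoOn φ s) {y b : ℕ → β} (hys : ∀ k, y k ∈ s) (hbs : ∀ k, b k ∈ s)
    (hy : ∀ k, φ (y (k + 1)) ≤ y k) (hb : ∀ k, b k ≤ φ (b (k + 1))) (h0 : y 0 ≤ b 0) :
    ∀ k, y k ≤ b k
  | 0 => h0
  | k + 1 => (hφ.le_iff_le (hys _) (hbs _)).1
      ((hy k).trans ((hφ.le_of_map_succ_le hys hbs hy hb h0 k).trans (hb k)))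

lemma strictMonoOn_mul_one_add_rpow {α : ℝ} (hα : 0 ≤ α) :
    StrictMonoOn (fun y : ℝ ↦ y * (1 + y) ^ α) (Ioi 0) := by
  intro y (hy : 0 < y) z _ hyz
  exact mul_lt_mul hyz (rpow_le_rpow (by linarith) (by linarith) hα)
    (rpow_pos_of_pos (by linarith) α) (by linarith)

lemma rpow_le_div_one_add_mul_log {α : ℝ} (hα : 0 ≤ α) {ξ : ℕ → ℝ} (hpos : ∀ k, 0 < ξ k)
    (hrec : ∀ k, ξ k - ξ (k + 1) ≥ ξ (k + 1) ^ (1 + α)) :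
    ∀ k : ℕ, ξ k ^ α ≤ ξ 0 ^ α / (1 + α * k / (1 + α) * log (1 + ξ 0 ^ α)) := by
  set t := ξ 0 ^ α
  have ht : 0 < t := rpow_pos_of_pos (hpos 0) α
  have hA (n : ℕ) : 1 ≤ 1 + α * n / (1 + α) * log (1 + t) := by
    have : 0 ≤ log (1 + t) := log_nonneg (by linarith)
    have : 0 ≤ α * n / (1 + α) := by positivity
    nlinarith
  refine (strictMonoOn_mul_one_add_rpow hα).le_of_map_succ_le
    (fun k ↦ rpow_pos_of_pos (hpos k) α) (fun k ↦ div_pos ht (one_pos.trans_le (hA k)))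
    (fun k ↦ ?_) (fun k ↦ ?_) (by simp [t])
  · have hx := hpos (k + 1)
    have h_step : ξ (k + 1) * (1 + ξ (k + 1) ^ α) ≤ ξ k := by
      have := hrec k
      rw [rpow_add hx, rpow_one] at this
      linarith
    calc ξ (k + 1) ^ α * (1 + ξ (k + 1) ^ α) ^ α
        = (ξ (k + 1) * (1 + ξ (k + 1) ^ α)) ^ α := by
          rw [mul_rpow hx.le (by positivity)]
      _ ≤ ξ k ^ α := rpow_le_rpow (by positivity) h_step hα
  · have h_next : 1 + α * ↑(k + 1) / (1 + α) * log (1 + t) =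
        1 + α * k / (1 + α) * log (1 + t) + α / (1 + α) * log (1 + t) := by
      push_cast; ring
    simpa only [h_next] using div_le_mul_one_add_rpow hα ht (hA k)

lemma div_one_add_mul_log_le {α t k : ℝ} (hα : 0 < α) (ht : 0 < t) (hk : 0 < k) :
    t / (1 + α * k / (1 + α) * log (1 + t)) ≤ (1 + 1 / α) * (1 + t) / k := by
  have hL : 0 < log (1 + t) := log_pos (by linarith)
  have h_log : t ≤ (1 + t) * log (1 + t) := by
    have := one_sub_inv_le_log_of_pos (by linarith : 0 < 1 + t)
    have : 1 - (1 + t)⁻¹ = t / (1 + t) := by field_simp; ring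
    rw [← div_le_iff₀' (by linarith)]
    linarith
  calc t / (1 + α * k / (1 + α) * log (1 + t))
      ≤ t / (α * k / (1 + α) * log (1 + t)) := by gcongr; linarith
    _ ≤ (1 + t) * log (1 + t) / (α * k / (1 + α) * log (1 + t)) := by gcongr
    _ = (1 + 1 / α) * (1 + t) / k := by field_simp; ring

theorem stmt4 (α : ℝ) (hα : α ∈ Set.Ioc (0 : ℝ) 1)
    (ξ : ℕ → ℝ) (hpos : ∀ k, 0 < ξ k)
    (hrec : ∀ k : ℕ, ξ k - ξ (k + 1) ≥ ξ (k + 1) ^ (1 + α)) :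
    (∀ k : ℕ, ξ k ≤ ξ 0 / (1 + α * k / (1 + α) * Real.log (1 + ξ 0 ^ α)) ^ (1 / α)) ∧
    (∀ k : ℕ, 1 ≤ k → ξ k ≤ ((1 + 1 / α) * (1 + ξ 0 ^ α) / k) ^ (1 / α)) := by
  have hα0 : 0 < α := hα.1
  have ht : 0 < ξ 0 ^ α := rpow_pos_of_pos (hpos 0) α
  have h_den (k : ℕ) : 0 < 1 + α * k / (1 + α) * log (1 + ξ 0 ^ α) := by
    have := log_pos (by linarith : 1 < 1 + ξ 0 ^ α)
    positivity
  have h_root (k : ℕ) :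
      ξ k ≤ (ξ 0 ^ α / (1 + α * k / (1 + α) * log (1 + ξ 0 ^ α))) ^ (1 / α) := by
    rw [one_div, le_rpow_inv_iff_of_pos (hpos k).le (div_pos ht (h_den k)).le hα0]
    exact rpow_le_div_one_add_mul_log hα0.le hpos hrec k
  refine ⟨fun k ↦ ?_, fun k hk ↦ (h_root k).trans ?_⟩
  · have h_root := h_root k
    rwa [div_rpow (by positivity) (h_den k).le, one_div, rpow_rpow_inv (hpos 0).le hα0.ne',
      ← one_div] at h_root
  · exact rpow_le_rpow (div_pos ht (h_den k)).le
      (div_one_add_mul_log_le hα0 ht (by exact_mod_cast hk))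
      (by positivity)
end

section
/- Let p ≥ 1 be an integer, x_0 ∈ s, let a_j > 0 for j ≥ 1 with A_k = Σ_{j=1}^{k} a_j (A_0 = 0), let T_0, T_1, … ∈ s, and define the estimating functions Ψ_k(x) = d_{p+1}(x − x_0) + Σ_{j=1}^{k} a_j·[ f(T_{j−1}) + ⟨∇f(T_{j−1}), x − T_{j−1}⟩ + ψ(x) ]. Let v_k be a minimizer of Ψ_k over s. Then for every k ≥ 0 and every x ∈ s: A_k·F(x) + d_{p+1}(x − x_0) ≥ Ψ_k(x) ≥ Ψ_k(v_k) + (1/(p+1))·(1/2)^{p−1}·‖x − v_k‖^{p+1}. -/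
/-!
Write `Ψ_k = d + Φ` with `d z = ‖z - x₀‖^(p+1)/(p+1)` and `Φ` the weighted sum of the linear
models plus `ψ`. The first inequality is the gradient inequality `f T + ⟪∇f T, x - T⟫ ≤ f x`
summed with the weights `a_j`.

For the second, put `m = p - 1`. The gradient `u ↦ ‖u‖^m • u` of `d` is uniformly monotone,
`⟪‖x‖^m • x - ‖y‖^m • y, x - y⟫ ≥ 2^(-m) ‖x - y‖^(m+2)`, by the identity
`⟪‖x‖^m • x - ‖y‖^m • y, x - y⟫ = ½(‖x‖^m + ‖y‖^m)‖x - y‖² + ½(‖x‖^m - ‖y‖^m)(‖x‖² - ‖y‖²)`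
and `2‖x - y‖^m ≤ 2(‖x‖ + ‖y‖)^m ≤ 2^m(‖x‖^m + ‖y‖^m)`. Integrating along the segment from `v`
to `x` gives `d x ≥ d v + ⟪∇d v, x - v⟫ + 2^(-m)/(m+2) ‖x - v‖^(m+2)`, while first-order
optimality of the minimiser `v` of `d + Φ`, with `Φ` convex, gives `Φ x - Φ v ≥ -⟪∇d v, x - v⟫`.
-/

open Set
open scoped RealInnerProductSpace

lemma two_mul_add_pow_le {a b : ℝ} (ha : 0 ≤ a) (hb : 0 ≤ b) (m : ℕ) :
    2 * (a + b) ^ m ≤ 2 ^ m * (a ^ m + b ^ m) := by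
  rcases m with _ | m
  · norm_num
  · have := add_pow_le ha hb (m + 1)
    rw [Nat.add_sub_cancel] at this
    rw [pow_succ' (2 : ℝ)]
    linarith

section NormedSpace

variable {E : Type*} [NormedAddCommGroup E] [NormedSpace ℝ E] {s : Set E}

lemma HasFDerivAt.hasDerivAt_comp_lineMap {f : E → ℝ} {f' : E →L[ℝ] ℝ} {y : E}
    (hf : HasFDerivAt f f' y) (z : E) :
    HasDerivAt (fun t : ℝ ↦ f (AffineMap.lineMap y z t)) (f' (z - y)) 0 := by
  rw [← AffineMap.lineMap_apply_zero (k := ℝ) y z] at hf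
  exact hf.comp_hasDerivAt 0 AffineMap.hasDerivAt_lineMap

lemma ConvexOn.add_fderiv_sub_le {f : E → ℝ} {f' : E →L[ℝ] ℝ} {y z : E}
    (hf : ConvexOn ℝ s f) (hy : y ∈ s) (hz : z ∈ s) (hf' : HasFDerivAt f f' y) :
    f y + f' (z - y) ≤ f z := by
  have := (hf.comp_affineMap (AffineMap.lineMap y z)).le_slope_of_hasDerivAt
    (by simpa using hy) (by simpa using hz) zero_lt_one (hf'.hasDerivAt_comp_lineMap z)
  simp only [slope_def_field, Function.comp_apply, AffineMap.lineMap_apply_zero,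
    AffineMap.lineMap_apply_one, sub_zero, div_one] at this
  linarith

lemma ConvexOn.sub_le_fderiv_of_isMinOn_add {g Φ : E → ℝ} {g' : E →L[ℝ] ℝ} {v x : E}
    (hΦ : ConvexOn ℝ s Φ) (hg : HasFDerivAt g g' v) (hmin : IsMinOn (g + Φ) s v)
    (hv : v ∈ s) (hx : x ∈ s) :
    Φ v - Φ x ≤ g' (x - v) := by
  let u : ℝ → ℝ := fun t ↦ g (AffineMap.lineMap v x t) + t * (Φ x - Φ v)
  have hu : HasDerivAt u (g' (x - v) + (Φ x - Φ v)) 0 := by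
    have := (hg.hasDerivAt_comp_lineMap x).add ((hasDerivAt_id (0 : ℝ)).mul_const (Φ x - Φ v))
    rwa [one_mul] at this
  -- along the segment `Φ` lies below its chord, so `u` is minimal at `0`
  have humin : IsMinOn u (Icc 0 1) 0 := by
    intro t ⟨ht0, ht1⟩
    have hchord : Φ (AffineMap.lineMap v x t) ≤ (1 - t) * Φ v + t * Φ x := by
      simpa [AffineMap.lineMap_apply_module] using hΦ.2 hv hx (sub_nonneg.2 ht1) ht0 (by ring)
    have := hmin (hΦ.1.lineMap_mem hv hx ⟨ht0, ht1⟩)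
    simp only [mem_ofPred_eq, Pi.add_apply] at this
    simp only [mem_ofPred_eq, u, AffineMap.lineMap_apply_zero, zero_mul, add_zero]
    nlinarith
  have := humin.localize.hasFDerivWithinAt_nonneg hu.hasFDerivAt.hasFDerivWithinAt
    (y := 1) (mem_posTangentConeAt_of_segment_subset (by simp [segment_eq_Icc]))
  simp only [ContinuousLinearMap.toSpanSingleton_apply, smul_eq_mul, one_mul] at this
  linarith

lemma ConvexOn.finset_sum {ι : Type*} {t : Finset ι} {g : ι → E → ℝ} (hs : Convex ℝ s)
    (hg : ∀ i ∈ t, ConvexOn ℝ s (g i)) : ConvexOn ℝ s (fun x ↦ ∑ i ∈ t, g i x) := by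
  have h := Finset.sum_induction g (ConvexOn ℝ s) (fun _ _ ↦ ConvexOn.add) (convexOn_const 0 hs) hg
  exact h.congr fun x _ ↦ Finset.sum_apply x t g

end NormedSpace

section InnerProductSpace

variable {E : Type*} [NormedAddCommGroup E] [InnerProductSpace ℝ E] {s : Set E}

lemma half_pow_mul_norm_sub_pow_le (m : ℕ) (x y : E) :
    (1 / 2) ^ m * ‖x - y‖ ^ (m + 2) ≤ ‖x‖ ^ m * ⟪x, x - y⟫ - ‖y‖ ^ m * ⟪y, x - y⟫ := by
  have hid : ‖x‖ ^ m * ⟪x, x - y⟫ - ‖y‖ ^ m * ⟪y, x - y⟫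
      = (‖x‖ ^ m + ‖y‖ ^ m) * ‖x - y‖ ^ 2 / 2
        + (‖x‖ ^ m - ‖y‖ ^ m) * (‖x‖ ^ 2 - ‖y‖ ^ 2) / 2 := by
    rw [norm_sub_sq_real, inner_sub_right, inner_sub_right, real_inner_self_eq_norm_sq,
      real_inner_self_eq_norm_sq, real_inner_comm y x]
    ring
  have hcross : 0 ≤ (‖x‖ ^ m - ‖y‖ ^ m) * (‖x‖ ^ 2 - ‖y‖ ^ 2) := by
    rcases le_total ‖x‖ ‖y‖ with h | h
    · exact mul_nonneg_of_nonpos_of_nonpos (sub_nonpos.2 (by gcongr)) (sub_nonpos.2 (by gcongr))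
    · exact mul_nonneg (sub_nonneg.2 (by gcongr)) (sub_nonneg.2 (by gcongr))
  have hsum : 2 * ((1 / 2) ^ m * ‖x - y‖ ^ m) ≤ ‖x‖ ^ m + ‖y‖ ^ m := by
    calc 2 * ((1 / 2) ^ m * ‖x - y‖ ^ m)
        ≤ (1 / 2) ^ m * (2 * (‖x‖ + ‖y‖) ^ m) := by
          rw [mul_left_comm]
          gcongr
          exact norm_sub_le x y
      _ ≤ (1 / 2) ^ m * (2 ^ m * (‖x‖ ^ m + ‖y‖ ^ m)) :=
          mul_le_mul_of_nonneg_left (two_mul_add_pow_le (norm_nonneg x) (norm_nonneg y) m)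
            (by positivity)
      _ = ‖x‖ ^ m + ‖y‖ ^ m := by rw [← mul_assoc, ← mul_pow]; norm_num
  calc (1 / 2) ^ m * ‖x - y‖ ^ (m + 2)
      = 2 * ((1 / 2) ^ m * ‖x - y‖ ^ m) * ‖x - y‖ ^ 2 / 2 := by ring
    _ ≤ (‖x‖ ^ m + ‖y‖ ^ m) * ‖x - y‖ ^ 2 / 2 := by gcongr
    _ ≤ _ := by rw [hid]; linarith

lemma hasFDerivAt_norm_pow_div (m : ℕ) (x : E) :
    HasFDerivAt (fun x : E ↦ ‖x‖ ^ (m + 2) / (m + 2)) (‖x‖ ^ m • innerSL ℝ x) x := by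
  have hfun : (fun x : E ↦ ‖x‖ ^ (m + 2) / (m + 2))
      = fun x ↦ (m + 2 : ℝ)⁻¹ • ‖x‖ ^ ((m + 2 : ℕ) : ℝ) := by
    ext y
    rw [Real.rpow_natCast, smul_eq_mul, div_eq_inv_mul]
  have hderiv : ‖x‖ ^ m • innerSL ℝ x = (m + 2 : ℝ)⁻¹ •
      ((((m + 2 : ℕ) : ℝ) * ‖x‖ ^ (((m + 2 : ℕ) : ℝ) - 2)) • innerSL ℝ x) := by
    rw [smul_smul, show ((m + 2 : ℕ) : ℝ) - 2 = (m : ℕ) by push_cast; ring, Real.rpow_natCast]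
    push_cast
    field_simp
  rw [hfun, hderiv]
  exact (hasFDerivAt_norm_rpow x (p := (m + 2 : ℕ)) (by norm_cast; omega)).const_smul (m + 2 : ℝ)⁻¹

lemma hasDerivAt_norm_add_smul_pow_div (m : ℕ) (w h : E) (t : ℝ) :
    HasDerivAt (fun t : ℝ ↦ ‖w + t • h‖ ^ (m + 2) / (m + 2))
      (‖w + t • h‖ ^ m * ⟪w + t • h, h⟫) t := by
  have hline : HasDerivAt (fun t : ℝ ↦ w + t • h) h t := by
    simpa using ((hasDerivAt_id t).smul_const h).const_add w
  have hd := (hasFDerivAt_norm_pow_div m (w + t • h)).comp_hasDerivAt t hline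
  simp only [FunLike.coe_smul, Pi.smul_apply, innerSL_apply_apply, smul_eq_mul] at hd
  exact hd

lemma norm_pow_div_add_inner_add_le (m : ℕ) (w h : E) :
    ‖w‖ ^ (m + 2) / (m + 2) + ‖w‖ ^ m * ⟪w, h⟫ + 1 / (m + 2) * (1 / 2) ^ m * ‖h‖ ^ (m + 2)
      ≤ ‖w + h‖ ^ (m + 2) / (m + 2) := by
  set c := 1 / (m + 2 : ℝ) * (1 / 2) ^ m * ‖h‖ ^ (m + 2)
  let r : ℝ → ℝ := fun t ↦
    ‖w + t • h‖ ^ (m + 2) / (m + 2) - t * (‖w‖ ^ m * ⟪w, h⟫) - c * t ^ (m + 2)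
  let r' : ℝ → ℝ := fun t ↦
    ‖w + t • h‖ ^ m * ⟪w + t • h, h⟫ - ‖w‖ ^ m * ⟪w, h⟫ - c * ((m + 2) * t ^ (m + 1))
  have hr : ∀ t, HasDerivAt r (r' t) t := by
    intro t
    have hsum : HasDerivAt r _ t :=
      ((hasDerivAt_norm_add_smul_pow_div m w h t).sub
        ((hasDerivAt_id t).mul_const (‖w‖ ^ m * ⟪w, h⟫))).sub
        ((hasDerivAt_pow (m + 2) t).const_mul c)
    refine hsum.congr_deriv ?_
    simp only [r', Nat.cast_add]
    push_cast
    ring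
  -- `t * r' t` is the monotonicity gap of the gradient between `w + t • h` and `w`
  have hr'_nonneg : ∀ t ∈ interior (Ici (0 : ℝ)), 0 ≤ r' t := by
    intro t ht
    rw [interior_Ici, mem_Ioi] at ht
    have key := half_pow_mul_norm_sub_pow_le m (w + t • h) w
    rw [add_sub_cancel_left, norm_smul, Real.norm_of_nonneg ht.le, real_inner_smul_right,
      real_inner_smul_right] at key
    have hgap : t * ((1 / 2) ^ m * ‖h‖ ^ (m + 2) * t ^ (m + 1))
        ≤ t * (‖w + t • h‖ ^ m * ⟪w + t • h, h⟫ - ‖w‖ ^ m * ⟪w, h⟫) := by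
      calc t * ((1 / 2) ^ m * ‖h‖ ^ (m + 2) * t ^ (m + 1))
          = (1 / 2) ^ m * (t * ‖h‖) ^ (m + 2) := by ring
        _ ≤ _ := key
        _ = _ := by ring
    have hc : c * ((m + 2) * t ^ (m + 1)) = (1 / 2) ^ m * ‖h‖ ^ (m + 2) * t ^ (m + 1) := by
      simp only [c]
      field_simp
    simp only [r', hc]
    linarith [le_of_mul_le_mul_left hgap ht]
  have hmono : MonotoneOn r (Ici 0) :=
    monotoneOn_of_hasDerivWithinAt_nonneg (convex_Ici 0)
      (fun t _ ↦ (hr t).continuousAt.continuousWithinAt)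
      (fun t _ ↦ (hr t).hasDerivWithinAt) hr'_nonneg
  have hr0 : r 0 = ‖w‖ ^ (m + 2) / (m + 2) := by simp [r]
  have hr1 : r 1 = ‖w + h‖ ^ (m + 2) / (m + 2) - ‖w‖ ^ m * ⟪w, h⟫ - c := by simp [r]
  linarith [hmono (mem_Ici.2 le_rfl) (mem_Ici.2 zero_le_one) zero_le_one]

lemma ConvexOn.add_inner_sub_le_of_hasGradientAt [CompleteSpace E] {f : E → ℝ}
    {g y z : E} (hf : ConvexOn ℝ s f) (hy : y ∈ s) (hz : z ∈ s) (hg : HasGradientAt f g y) :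
    f y + ⟪g, z - y⟫ ≤ f z := by
  simpa only [InnerProductSpace.toDual_apply_apply] using hf.add_fderiv_sub_le hy hz hg.hasFDerivAt

lemma ConvexOn.const_add_inner_sub_add {ψ : E → ℝ} (hψ : ConvexOn ℝ s ψ) (c : ℝ)
    (g y : E) : ConvexOn ℝ s (fun z ↦ c + ⟪g, z - y⟫ + ψ z) := by
  refine ((((innerₛₗ ℝ g).convexOn hψ.1).add_const (c - ⟪g, y⟫)).add hψ).congr fun z _ ↦ ?_
  simp only [Pi.add_apply, innerₛₗ_apply_apply, inner_sub_right]
  ring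

lemma ConvexOn.norm_sub_pow_div_add_le_of_isMinOn {Φ : E → ℝ} {x0 v x : E} (m : ℕ)
    (hΦ : ConvexOn ℝ s Φ) (hmin : IsMinOn (fun z ↦ ‖z - x0‖ ^ (m + 2) / (m + 2) + Φ z) s v)
    (hv : v ∈ s) (hx : x ∈ s) :
    ‖v - x0‖ ^ (m + 2) / (m + 2) + Φ v + 1 / (m + 2) * (1 / 2) ^ m * ‖x - v‖ ^ (m + 2)
      ≤ ‖x - x0‖ ^ (m + 2) / (m + 2) + Φ x := by
  have hd := (hasFDerivAt_norm_pow_div m (v - x0)).comp v ((hasFDerivAt_id v).sub_const x0)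
  have hopt := hΦ.sub_le_fderiv_of_isMinOn_add hd hmin hv hx
  simp only [ContinuousLinearMap.comp_apply, ContinuousLinearMap.id_apply, FunLike.coe_smul,
    Pi.smul_apply, innerSL_apply_apply, smul_eq_mul] at hopt
  have hunif := norm_pow_div_add_inner_add_le m (v - x0) (x - v)
  rw [sub_add_sub_cancel'] at hunif
  linarith

end InnerProductSpace

theorem stmt6_general {E : Type*} [NormedAddCommGroup E] [InnerProductSpace ℝ E]
    [FiniteDimensional ℝ E]
    (s : Set E) (hsconv : Convex ℝ s)
    (ψ : E → ℝ) (hψ : ConvexOn ℝ s ψ)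
    (f : E → ℝ) (f' : E → E) (hf' : ∀ x, HasGradientAt f (f' x) x)
    (hfconv : ConvexOn ℝ Set.univ f)
    (p : ℕ) (hp : 1 ≤ p)
    (x0 : E)
    (a : ℕ → ℝ) (ha : ∀ j : ℕ, 1 ≤ j → 0 < a j)
    (A : ℕ → ℝ) (hA : ∀ k, A k = ∑ j ∈ Finset.Icc 1 k, a j)
    (T : ℕ → E)
    (Ψ : ℕ → E → ℝ)
    (hΨ : ∀ k z, Ψ k z = ‖z - x0‖ ^ (p + 1) / (p + 1) +
        ∑ j ∈ Finset.Icc 1 k,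
          a j * (f (T (j - 1)) + ⟪f' (T (j - 1)), z - T (j - 1)⟫ + ψ z))
    (v : ℕ → E) (hv : ∀ k, v k ∈ s ∧ ∀ z ∈ s, Ψ k (v k) ≤ Ψ k z) :
    ∀ k : ℕ, ∀ x ∈ s,
      A k * (f x + ψ x) + ‖x - x0‖ ^ (p + 1) / (p + 1) ≥ Ψ k x ∧
      Ψ k x ≥ Ψ k (v k) + 1 / (p + 1 : ℝ) * (1 / 2 : ℝ) ^ (p - 1) * ‖x - v k‖ ^ (p + 1) := by
  obtain ⟨m, rfl⟩ : ∃ m, p = m + 1 := ⟨p - 1, by omega⟩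
  have hcast : ((m + 1 : ℕ) : ℝ) + 1 = m + 2 := by push_cast; ring
  simp only [hcast, Nat.add_sub_cancel] at hΨ ⊢
  intro k x hx
  set Φ : E → ℝ := fun z ↦ ∑ j ∈ Finset.Icc 1 k,
    a j * (f (T (j - 1)) + ⟪f' (T (j - 1)), z - T (j - 1)⟫ + ψ z)
  have hΨk : ∀ z, Ψ k z = ‖z - x0‖ ^ (m + 2) / (m + 2) + Φ z := fun z ↦ hΨ k z
  refine ⟨?_, ?_⟩
  · have hmodel : Φ x ≤ A k * (f x + ψ x) := by
      rw [hA, Finset.sum_mul]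
      refine Finset.sum_le_sum fun j hj ↦
        mul_le_mul_of_nonneg_left ?_ (ha j (Finset.mem_Icc.1 hj).1).le
      have := hfconv.add_inner_sub_le_of_hasGradientAt (mem_univ _) (mem_univ x) (hf' (T (j - 1)))
      linarith
    rw [hΨk]
    linarith
  · have hΦ : ConvexOn ℝ s Φ := ConvexOn.finset_sum hsconv fun j hj ↦
      (hψ.const_add_inner_sub_add _ _ _).smul (ha j (Finset.mem_Icc.1 hj).1).le
    have := hΦ.norm_sub_pow_div_add_le_of_isMinOn (x0 := x0) m
      (fun z hz ↦ by simpa only [mem_ofPred_eq, hΨk] using (hv k).2 z hz) (hv k).1 hx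
    rw [hΨk, hΨk]
    linarith

theorem stmt6 {E : Type*} [NormedAddCommGroup E] [InnerProductSpace ℝ E]
    [FiniteDimensional ℝ E]
    (s : Set E) (hs : s.Nonempty) (hsconv : Convex ℝ s)
    (ψ : E → ℝ) (hψ : ConvexOn ℝ s ψ)
    (f : E → ℝ) (f' : E → E) (hf' : ∀ x, HasGradientAt f (f' x) x)
    (hfconv : ConvexOn ℝ Set.univ f)
    (p : ℕ) (hp : 1 ≤ p)
    (x0 : E) (hx0 : x0 ∈ s)
    (a : ℕ → ℝ) (ha : ∀ j : ℕ, 1 ≤ j → 0 < a j)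
    (A : ℕ → ℝ) (hA : ∀ k, A k = ∑ j ∈ Finset.Icc 1 k, a j)
    (T : ℕ → E) (hT : ∀ j, T j ∈ s)
    (Ψ : ℕ → E → ℝ)
    (hΨ : ∀ k z, Ψ k z = ‖z - x0‖ ^ (p + 1) / (p + 1) +
        ∑ j ∈ Finset.Icc 1 k,
          a j * (f (T (j - 1)) + ⟪f' (T (j - 1)), z - T (j - 1)⟫ + ψ z))
    (v : ℕ → E) (hv : ∀ k, v k ∈ s ∧ ∀ z ∈ s, Ψ k (v k) ≤ Ψ k z) :
    ∀ k : ℕ, ∀ x ∈ s,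
      A k * (f x + ψ x) + ‖x - x0‖ ^ (p + 1) / (p + 1) ≥ Ψ k x ∧
      Ψ k x ≥ Ψ k (v k) + 1 / (p + 1 : ℝ) * (1 / 2 : ℝ) ^ (p - 1) * ‖x - v k‖ ^ (p + 1) :=
  stmt6_general s hsconv ψ hψ f f' hf' hfconv p hp x0 a ha A hA T Ψ hΨ v hv
end

section
/- Consider the non-Euclidean composite gradient iteration. Then for every i ≥ 0: (a) φ(z_{i+1}) ≤ φ(z_i) − L·β_ρ(z_i, z_{i+1}); (b) for every z ∈ s, β_ρ(z_{i+1}, z) ≤ (1 − κ/2)·β_ρ(z_i, z) + (1/(2L))·(φ(z) − φ(z_{i+1})); and (c) if z* is a minimizer of φ over s, then β_ρ(z_{i+1}, z*) ≤ (1 − κ/2)^{i+1}·β_ρ(z_0, z*) + (1/(2L))·(φ(z*) − φ(z_{i+1})). -/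
/-!
Minimality of `x₁ = z (i + 1)` for the convex model `⟪h' x, · - x⟫ + ψ + 2L β(x, ·)` at `x = z i`,
tested along the segment towards any `w ∈ s`, gives the three-point inequality
`ψ x₁ - ψ w ≤ ⟪h' x, w - x₁⟫ + 2L (β(x, w) - β(x, x₁) - β(x₁, w))`.
Adding relative smoothness at `(x, x₁)` and relative strong convexity at `(x, w)` gives (b);
testing minimality at `w = x` together with smoothness gives (a). For (c), unroll (b) at `w = z*`:
every error term `φ z* - φ (z j)` is nonpositive, so the contraction factors simply multiply.
-/

open scoped RealInnerProductSpace
open Set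

section FirstOrder

variable {E : Type*} [NormedAddCommGroup E] [NormedSpace ℝ E]

theorem HasFDerivAt.le_apply_of_forall_mul_le_sub {g : E → ℝ} {g' : E →L[ℝ] ℝ} {x v : E} {c : ℝ}
    (hg : HasFDerivAt g g' x) (h : ∀ t ∈ Ioc (0 : ℝ) 1, t * c ≤ g (x + t • v) - g x) :
    c ≤ g' v := by
  have hk : HasDerivAt (fun t : ℝ => g (x + t • v) - t * c) (g' v - c) 0 :=
    (hg.hasLineDerivAt v).fun_sub (hasDerivAt_mul_const c)
  have hmin : IsLocalMinOn (fun t : ℝ => g (x + t • v) - t * c) (Icc 0 1) 0 := by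
    refine IsMinOn.localize fun t ht => ?_
    rcases ht.1.eq_or_lt with rfl | ht0
    · simp
    · have hct := h t ⟨ht0, ht.2⟩
      simp only [mem_ofPred_eq, zero_smul, add_zero, zero_mul, sub_zero]
      linarith
  have hone : (1 : ℝ) ∈ posTangentConeAt (Icc 0 1) 0 :=
    mem_posTangentConeAt_of_segment_subset (by rw [zero_add, segment_eq_Icc zero_le_one])
  simpa using hmin.hasFDerivWithinAt_nonneg hk.hasFDerivAt.hasFDerivWithinAt hone

theorem ConvexOn.apply_add_smul_sub_le {s : Set E} {ψ : E → ℝ} (hψ : ConvexOn ℝ s ψ) {x w : E}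
    (hx : x ∈ s) (hw : w ∈ s) {t : ℝ} (ht : t ∈ Icc (0 : ℝ) 1) :
    ψ (x + t • (w - x)) ≤ ψ x + t * (ψ w - ψ x) := by
  have hconv := hψ.2 hx hw (sub_nonneg.2 ht.2) ht.1 (sub_add_cancel 1 t)
  rw [show (1 - t) • x + t • w = x + t • (w - x) by module, smul_eq_mul, smul_eq_mul] at hconv
  linarith

theorem ConvexOn.add_fderiv_sub_le_s10 {s : Set E} {g : E → ℝ} {g' : E →L[ℝ] ℝ} (hg : ConvexOn ℝ s g)
    {x w : E} (hx : x ∈ s) (hw : w ∈ s) (hd : HasFDerivAt g g' x) : g x + g' (w - x) ≤ g w := by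
  have hslope := hd.neg.le_apply_of_forall_mul_le_sub (v := w - x) (c := g x - g w) fun t ht => by
    have hchord := hg.apply_add_smul_sub_le hx hw (Ioc_subset_Icc_self ht)
    simp only [Pi.neg_apply]
    linarith
  simp only [neg_apply] at hslope
  linarith

theorem IsMinOn.sub_le_fderiv_of_convexOn {s : Set E} {g ψ : E → ℝ} {g' : E →L[ℝ] ℝ} {x w : E}
    (hmin : IsMinOn (g + ψ) s x) (hs : Convex ℝ s) (hψ : ConvexOn ℝ s ψ) (hd : HasFDerivAt g g' x)
    (hx : x ∈ s) (hw : w ∈ s) : ψ x - ψ w ≤ g' (w - x) :=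
  hd.le_apply_of_forall_mul_le_sub fun t ht => by
    have hxt := hmin (hs.add_smul_sub_mem hx hw (Ioc_subset_Icc_self ht))
    have hchord := hψ.apply_add_smul_sub_le hx hw (Ioc_subset_Icc_self ht)
    simp only [mem_ofPred_eq, Pi.add_apply] at hxt
    linarith

end FirstOrder

section Bregman

variable {E : Type*} [NormedAddCommGroup E] [InnerProductSpace ℝ E] (ρ : E → ℝ) (ρ' : E → E)

def bregman (x w : E) : ℝ := ρ w - ρ x - ⟪ρ' x, w - x⟫

@[simp]
theorem bregman_self (x : E) : bregman ρ ρ' x x = 0 := by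
  simp [bregman]

theorem bregman_sub_bregman_sub_bregman (x u w : E) :
    bregman ρ ρ' x w - bregman ρ ρ' x u - bregman ρ ρ' u w = ⟪ρ' u - ρ' x, w - u⟫ := by
  simp only [bregman, inner_sub_left, inner_sub_right]
  ring

variable [CompleteSpace E] {ρ ρ'}

theorem bregman_nonneg (hρ : ConvexOn ℝ univ ρ) {x : E} (hρ' : HasGradientAt ρ (ρ' x) x) (w : E) :
    0 ≤ bregman ρ ρ' x w := by
  have htangent :=
    hρ.add_fderiv_sub_le_s10 (mem_univ x) (mem_univ w) (hasGradientAt_iff_hasFDerivAt.1 hρ')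
  rw [InnerProductSpace.toDual_apply_apply] at htangent
  rw [bregman]
  linarith

theorem hasFDerivAt_bregman {u : E} (hρ' : HasGradientAt ρ (ρ' u) u) (x : E) :
    HasFDerivAt (bregman ρ ρ' x) (InnerProductSpace.toDual ℝ E (ρ' u - ρ' x)) u := by
  have hlin := ((InnerProductSpace.toDual ℝ E (ρ' x)).hasFDerivAt (x := u)).sub_const ⟪ρ' x, x⟫
  have hfun : bregman ρ ρ' x =
      fun w => ρ w - ρ x - (InnerProductSpace.toDual ℝ E (ρ' x) w - ⟪ρ' x, x⟫) := by
    funext w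
    simp [bregman, inner_sub_right]
  rw [hfun, map_sub]
  exact ((hasGradientAt_iff_hasFDerivAt.1 hρ').sub_const (ρ x)).sub hlin

end Bregman

section BregmanProxStep

variable {E : Type*} [NormedAddCommGroup E] [InnerProductSpace ℝ E] [CompleteSpace E]
  {s : Set E} {ψ ρ : E → ℝ} {ρ' : E → E} {a x x₁ w : E} {c : ℝ}

theorem IsMinOn.bregman_three_point
    (hmin : IsMinOn (fun v => ⟪a, v - x⟫ + ψ v + c * bregman ρ ρ' x v) s x₁) (hs : Convex ℝ s)
    (hψ : ConvexOn ℝ s ψ) (hρ' : HasGradientAt ρ (ρ' x₁) x₁) (hx₁ : x₁ ∈ s) (hw : w ∈ s) :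
    ψ x₁ - ψ w ≤ ⟪a, w - x₁⟫ + c * (bregman ρ ρ' x w - bregman ρ ρ' x x₁ - bregman ρ ρ' x₁ w) := by
  have hd : HasFDerivAt (fun v => ⟪a, v - x⟫ + c * bregman ρ ρ' x v)
      (InnerProductSpace.toDual ℝ E a + c • InnerProductSpace.toDual ℝ E (ρ' x₁ - ρ' x)) x₁ := by
    refine ((((InnerProductSpace.toDual ℝ E a).hasFDerivAt).sub_const ⟪a, x⟫).fun_add
      ((hasFDerivAt_bregman hρ' x).const_mul c)).congr_of_eventuallyEq (.of_forall fun v => ?_)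
    simp [inner_sub_right]
  have hmin' : IsMinOn ((fun v => ⟪a, v - x⟫ + c * bregman ρ ρ' x v) + ψ) s x₁ :=
    isMinOn_iff.2 fun v hv => by
      simpa only [Pi.add_apply, add_right_comm] using isMinOn_iff.1 hmin v hv
  have hopt := hmin'.sub_le_fderiv_of_convexOn hs hψ hd hx₁ hw
  rw [bregman_sub_bregman_sub_bregman]
  simpa [inner_add_left, inner_smul_left, inner_sub_left] using hopt

end BregmanProxStep

section RelativeSmoothness

variable {E : Type*} [NormedAddCommGroup E] [InnerProductSpace ℝ E]
  {s : Set E} {ψ ρ h : E → ℝ} {ρ' h' : E → E} {x x₁ w : E} {L μ : ℝ}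

theorem IsMinOn.add_le_sub_bregman
    (hmin : IsMinOn (fun v => ⟪h' x, v - x⟫ + ψ v + 2 * L * bregman ρ ρ' x v) s x₁) (hx : x ∈ s)
    (hsmooth : h x₁ - h x - ⟪h' x, x₁ - x⟫ ≤ L * bregman ρ ρ' x x₁) :
    (h + ψ) x₁ ≤ (h + ψ) x - L * bregman ρ ρ' x x₁ := by
  have hmodel := isMinOn_iff.1 hmin x hx
  simp only [sub_self, inner_zero_right, bregman_self] at hmodel
  simp only [Pi.add_apply]
  linarith

theorem IsMinOn.bregman_le [CompleteSpace E]
    (hmin : IsMinOn (fun v => ⟪h' x, v - x⟫ + ψ v + 2 * L * bregman ρ ρ' x v) s x₁)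
    (hs : Convex ℝ s) (hψ : ConvexOn ℝ s ψ) (hρ : ConvexOn ℝ univ ρ)
    (hρ' : ∀ v, HasGradientAt ρ (ρ' v) v) (hx₁ : x₁ ∈ s) (hw : w ∈ s) (hL : 0 < L)
    (hsmooth : h x₁ - h x - ⟪h' x, x₁ - x⟫ ≤ L * bregman ρ ρ' x x₁)
    (hconvex : μ * bregman ρ ρ' x w ≤ h w - h x - ⟪h' x, w - x⟫) :
    bregman ρ ρ' x₁ w ≤
      (1 - μ / L / 2) * bregman ρ ρ' x w + 1 / (2 * L) * ((h + ψ) w - (h + ψ) x₁) := by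
  have hthree := hmin.bregman_three_point hs hψ (hρ' x₁) hx₁ hw
  have hnonneg := bregman_nonneg hρ (hρ' x) x₁
  have hsplit : ⟪h' x, w - x₁⟫ = ⟪h' x, w - x⟫ - ⟪h' x, x₁ - x⟫ := by
    rw [← inner_sub_right, sub_sub_sub_cancel_right]
  have hscaled : 2 * L * bregman ρ ρ' x₁ w ≤
      (2 * L - μ) * bregman ρ ρ' x w + ((h + ψ) w - (h + ψ) x₁) := by
    simp only [Pi.add_apply]
    nlinarith
  rw [← mul_le_mul_iff_of_pos_left (by positivity : 0 < 2 * L)]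
  refine hscaled.trans_eq ?_
  field_simp

end RelativeSmoothness

theorem le_pow_mul_add_of_le_mul_add {b d : ℕ → ℝ} {q : ℝ} (hq : 0 ≤ q) (hd : ∀ i, d i ≤ 0)
    (hb : ∀ i, b (i + 1) ≤ q * b i + d (i + 1)) : ∀ i, b (i + 1) ≤ q ^ (i + 1) * b 0 + d (i + 1)
  | 0 => by simpa using hb 0
  | i + 1 => by
    have hprev := mul_le_mul_of_nonneg_left (le_pow_mul_add_of_le_mul_add hq hd hb i) hq
    have hqd := mul_nonpos_of_nonneg_of_nonpos hq (hd (i + 1))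
    rw [pow_succ']
    linarith [hb (i + 1)]

theorem stmt10_general {E : Type*} [NormedAddCommGroup E] [InnerProductSpace ℝ E]
    [FiniteDimensional ℝ E]
    (s : Set E) (hsconv : Convex ℝ s)
    (ψ : E → ℝ) (hψ : ConvexOn ℝ s ψ)
    (y : E) (hy : y ∈ s)
    (h : E → ℝ)
    (h' : E → E)
    (φ : E → ℝ) (hφ : ∀ z, φ z = h z + ψ z)
    (ρ : E → ℝ) (ρ' : E → E) (hρ' : ∀ x, HasGradientAt ρ (ρ' x) x)
    (hρconv : ConvexOn ℝ Set.univ ρ)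
    (Br : E → E → ℝ) (hBr : ∀ x w, Br x w = ρ w - ρ x - ⟪ρ' x, w - x⟫)
    (L μ : ℝ) (hμ : 0 < μ) (hμL : μ ≤ L)
    (hrel : ∀ x w, μ * Br x w ≤ h w - h x - ⟪h' x, w - x⟫ ∧
        h w - h x - ⟪h' x, w - x⟫ ≤ L * Br x w)
    (z : ℕ → E) (hz0 : z 0 = y)
    (hzs : ∀ i, z (i + 1) ∈ s)
    (hzmin : ∀ i : ℕ, ∀ w ∈ s,
        ⟪h' (z i), z (i + 1) - z i⟫ + ψ (z (i + 1)) + 2 * L * Br (z i) (z (i + 1))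
          ≤ ⟪h' (z i), w - z i⟫ + ψ w + 2 * L * Br (z i) w)
    :
    (∀ i : ℕ, φ (z (i + 1)) ≤ φ (z i) - L * Br (z i) (z (i + 1))) ∧
    (∀ i : ℕ, ∀ w ∈ s, Br (z (i + 1)) w ≤ (1 - μ / L / 2) * Br (z i) w
        + 1 / (2 * L) * (φ w - φ (z (i + 1)))) ∧
    (∀ zstar ∈ s, (∀ w ∈ s, φ zstar ≤ φ w) →
        ∀ i : ℕ, Br (z (i + 1)) zstar ≤ (1 - μ / L / 2) ^ (i + 1) * Br (z 0) zstar
            + 1 / (2 * L) * (φ zstar - φ (z (i + 1)))) := by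
  obtain rfl : Br = bregman ρ ρ' := funext₂ hBr
  obtain rfl : φ = h + ψ := funext hφ
  have hL : 0 < L := hμ.trans_le hμL
  have hmem : ∀ i, z i ∈ s
    | 0 => hz0 ▸ hy
    | i + 1 => hzs i
  have hstep : ∀ i, IsMinOn (fun w => ⟪h' (z i), w - z i⟫ + ψ w + 2 * L * bregman ρ ρ' (z i) w)
      s (z (i + 1)) := fun i => isMinOn_iff.2 (hzmin i)
  have hcontract : ∀ i, ∀ w ∈ s, bregman ρ ρ' (z (i + 1)) w ≤ (1 - μ / L / 2) *
      bregman ρ ρ' (z i) w + 1 / (2 * L) * ((h + ψ) w - (h + ψ) (z (i + 1))) := fun i w hw =>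
    (hstep i).bregman_le hsconv hψ hρconv hρ' (hzs i) hw hL (hrel _ _).2 (hrel _ _).1
  refine ⟨fun i => (hstep i).add_le_sub_bregman (hmem i) (hrel _ _).2, hcontract, ?_⟩
  intro zstar hzstar hopt
  have hq : 0 ≤ 1 - μ / L / 2 := by linarith [div_le_one_of_le₀ hμL hL.le]
  have herr : ∀ i, 1 / (2 * L) * ((h + ψ) zstar - (h + ψ) (z i)) ≤ 0 := fun i =>
    mul_nonpos_of_nonneg_of_nonpos (by positivity) (sub_nonpos.2 (hopt _ (hmem i)))
  exact le_pow_mul_add_of_le_mul_add (b := fun i => bregman ρ ρ' (z i) zstar) hq herr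
    (hcontract · zstar hzstar)

theorem stmt10 {E : Type*} [NormedAddCommGroup E] [InnerProductSpace ℝ E]
    [FiniteDimensional ℝ E]
    (s : Set E) (hs : s.Nonempty) (hsconv : Convex ℝ s)
    (ψ : E → ℝ) (hψ : ConvexOn ℝ s ψ)
    (f : E → ℝ) (f' : E → E) (hf' : ∀ x, HasGradientAt f (f' x) x)
    (hfconv : ConvexOn ℝ Set.univ f)
    (p : ℕ) (hp : 1 ≤ p)
    (y : E) (hy : y ∈ s) (H : ℝ) (hH : 0 < H)
    (h : E → ℝ) (hhdef : ∀ z, h z = f z + H * (‖z - y‖ ^ (p + 1) / (p + 1)))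
    (h' : E → E) (hh' : ∀ x, HasGradientAt h (h' x) x)
    (φ : E → ℝ) (hφ : ∀ z, φ z = h z + ψ z)
    (ρ : E → ℝ) (ρ' : E → E) (hρ' : ∀ x, HasGradientAt ρ (ρ' x) x)
    (hρconv : ConvexOn ℝ Set.univ ρ)
    (Br : E → E → ℝ) (hBr : ∀ x w, Br x w = ρ w - ρ x - ⟪ρ' x, w - x⟫)
    (L μ : ℝ) (hμ : 0 < μ) (hμL : μ ≤ L)
    (hrel : ∀ x w, μ * Br x w ≤ h w - h x - ⟪h' x, w - x⟫ ∧
        h w - h x - ⟪h' x, w - x⟫ ≤ L * Br x w)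
    (z : ℕ → E) (hz0 : z 0 = y)
    (hzs : ∀ i, z (i + 1) ∈ s)
    (hzmin : ∀ i : ℕ, ∀ w ∈ s,
        ⟪h' (z i), z (i + 1) - z i⟫ + ψ (z (i + 1)) + 2 * L * Br (z i) (z (i + 1))
          ≤ ⟪h' (z i), w - z i⟫ + ψ w + 2 * L * Br (z i) w)
    :
    (∀ i : ℕ, φ (z (i + 1)) ≤ φ (z i) - L * Br (z i) (z (i + 1))) ∧
    (∀ i : ℕ, ∀ w ∈ s, Br (z (i + 1)) w ≤ (1 - μ / L / 2) * Br (z i) w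
        + 1 / (2 * L) * (φ w - φ (z (i + 1)))) ∧
    (∀ zstar ∈ s, (∀ w ∈ s, φ zstar ≤ φ w) →
        ∀ i : ℕ, Br (z (i + 1)) zstar ≤ (1 - μ / L / 2) ^ (i + 1) * Br (z 0) zstar
            + 1 / (2 * L) * (φ zstar - φ (z (i + 1)))) :=
  stmt10_general s hsconv ψ hψ y hy h h' φ hφ ρ ρ' hρ' hρconv Br hBr L μ hμ hμL hrel z hz0 hzs hzmin
end

section
/- Let q ≥ 1 be an integer, p = 2q + 1, and R > 0. Then for all x, h ∈ E with ‖x‖ ≤ R: β_{d_{p+1}}(x, x + h) ≤ (2^{2q}/(p+1))·‖h‖^{2q+2} + (2^{3q+1}/(p+1))·R^{q+1}·‖h‖^{q+1} + R^{p}·‖h‖ + (2^{q}/(p+1))·R^{2q+2}. -/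
open scoped RealInnerProductSpace

lemma five_pow_le (q : ℕ) (hq : 1 ≤ q) : (5:ℝ) ^ (q+1) ≤ 2 ^ (3*q+2) := by
  induction q with
  | zero => omega
  | succ n ih =>
    rcases Nat.eq_or_lt_of_le hq with h | h
    · norm_num [← h]
    · have hn : 1 ≤ n := by omega
      have := ih hn
      have : (5:ℝ) ^ (n+1+1) = 5 * 5 ^ (n+1) := by ring
      rw [this]
      have h2 : 3*(n+1)+2 = 3 + (3*n+2) := by ring
      rw [h2]
      have h8 : (2:ℝ)^(3+(3*n+2)) = 8 * 2^(3*n+2) := by rw [pow_add]; norm_num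
      rw [h8]
      have h5 : (0:ℝ) ≤ 5 ^ (n+1) := by positivity
      nlinarith [ih hn]

lemma key (q : ℕ) (hq : 1 ≤ q) {R t : ℝ} (hR : 0 < R) (ht : 0 ≤ t) :
    (R + t) ^ (2*q+2) ≤ 2^(2*q) * t^(2*q+2) + 2^(3*q+1) * R^(q+1) * t^(q+1)
      + 2^q * R^(2*q+2) := by
  set A : ℝ := 2 ^ q with hA
  have hA2 : (2:ℝ) ≤ A := by
    calc (2:ℝ) = 2^1 := by norm_num
    _ ≤ 2^q := by apply pow_le_pow_right₀ (by norm_num) hq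
  set a : ℝ := R ^ (q+1) with ha
  set b : ℝ := t ^ (q+1) with hb
  have ha0 : 0 < a := by positivity
  have hb0 : 0 ≤ b := by positivity
  have e1 : (2:ℝ)^(2*q) = A^2 := by rw [hA, ← pow_mul]; ring_nf
  have e2 : (2:ℝ)^(3*q+1) = 2 * A^3 := by rw [hA, ← pow_mul, pow_succ]; ring_nf
  have e3 : t^(2*q+2) = b^2 := by rw [hb, ← pow_mul]; ring_nf
  have e4 : R^(2*q+2) = a^2 := by rw [ha, ← pow_mul]; ring_nf
  have e5 : (R+t)^(2*q+2) = ((R+t)^(q+1))^2 := by rw [← pow_mul]; ring_nf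
  rw [e1, e2, e3, e4, e5]
  have hAb : ((q+1) - 1) = q := by omega
  have hpow : (R+t)^(q+1) ≤ A * (a + b) := by
    have := add_pow_le hR.le ht (q+1)
    rwa [hAb] at this
  have hu0 : 0 ≤ (R+t)^(q+1) := by positivity
  rcases le_or_gt R (2*t) with hcase | hcase
  · -- large t
    have hab : a ≤ 2 * A * b := by
      have : R^(q+1) ≤ (2*t)^(q+1) := pow_le_pow_left₀ hR.le hcase _
      rw [mul_pow] at this
      calc a ≤ 2^(q+1) * b := this
      _ = 2 * A * b := by rw [pow_succ]; ring
    nlinarith [sq_nonneg (a+b), mul_nonneg (mul_nonneg (sub_nonneg.2 hA2) ha0.le) (sub_nonneg.2 hab)]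
  · -- small t
    have h1 : (R+t)^2 ≤ R * (R + 5/2 * t) := by nlinarith
    have h2 : ((R+t)^2)^(q+1) ≤ (R * (R + 5/2*t))^(q+1) :=
      pow_le_pow_left₀ (by positivity) h1 _
    have h3 : (R * (R + 5/2*t))^(q+1) = a * (R + 5/2*t)^(q+1) := by rw [mul_pow]
    have h4 : (R + 5/2*t)^(q+1) ≤ A * (a + (5/2)^(q+1) * b) := by
      have := add_pow_le hR.le (by positivity : (0:ℝ) ≤ 5/2 * t) (q+1)
      rw [hAb, mul_pow] at this
      exact this
    have h5 : ((5:ℝ)/2)^(q+1) ≤ 2 * A^2 := by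
      have := five_pow_le q hq
      rw [div_pow]
      rw [div_le_iff₀ (by positivity)]
      calc (5:ℝ)^(q+1) ≤ 2^(3*q+2) := this
      _ = 2 * A^2 * 2^(q+1) := by rw [hA, ← pow_mul]; rw [← pow_succ']; rw [← pow_add]; ring_nf
    have e6 : ((R+t)^2)^(q+1) = ((R+t)^(q+1))^2 := by rw [← pow_mul, ← pow_mul]; ring_nf
    rw [← e6]
    calc ((R+t)^2)^(q+1) ≤ a * (A * (a + (5/2)^(q+1) * b)) := by
          refine h2.trans ?_; rw [h3]
          exact mul_le_mul_of_nonneg_left h4 ha0.le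
    _ ≤ A^2 * b^2 + 2*A^3 * a * b + A * a^2 := by nlinarith [mul_nonneg ha0.le hb0, sq_nonneg b, mul_nonneg (mul_nonneg ha0.le hb0) (sub_nonneg.2 h5), sq_nonneg A]

theorem stmt16 {E : Type*} [NormedAddCommGroup E] [InnerProductSpace ℝ E]
    [FiniteDimensional ℝ E]
    (q : ℕ) (hq : 1 ≤ q) (p : ℕ) (hp : p = 2 * q + 1)
    (R : ℝ) (hR : 0 < R) :
    ∀ x h : E, ‖x‖ ≤ R →
      ‖x + h‖ ^ (p + 1) / (p + 1 : ℝ) - ‖x‖ ^ (p + 1) / (p + 1 : ℝ)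
          - ‖x‖ ^ (p - 1) * ⟪x, h⟫
        ≤ (2 : ℝ) ^ (2 * q) / (p + 1 : ℝ) * ‖h‖ ^ (2 * q + 2)
          + (2 : ℝ) ^ (3 * q + 1) / (p + 1 : ℝ) * R ^ (q + 1) * ‖h‖ ^ (q + 1)
          + R ^ p * ‖h‖
          + (2 : ℝ) ^ q / (p + 1 : ℝ) * R ^ (2 * q + 2) := by
  subst hp
  intro x h hx
  set s := ‖x‖ with hs
  set t := ‖h‖ with htd
  have ht : 0 ≤ t := norm_nonneg _
  have hs0 : 0 ≤ s := norm_nonneg _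
  have hD : (0:ℝ) < ((2*q+1 : ℕ) : ℝ) + 1 := by positivity
  set D : ℝ := ((2*q+1 : ℕ) : ℝ) + 1 with hDd
  have key1 : ‖x + h‖ ^ (2*q+2) ≤ 2^(2*q) * t^(2*q+2) + 2^(3*q+1)*R^(q+1)*t^(q+1)
      + 2^q * R^(2*q+2) := by
    calc ‖x+h‖^(2*q+2) ≤ (R+t)^(2*q+2) := by
          apply pow_le_pow_left₀ (norm_nonneg _)
          calc ‖x+h‖ ≤ s + t := norm_add_le x h
          _ ≤ R + t := by linarith
    _ ≤ _ := key q hq hR ht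
  have inner1 : -(s ^ (2*q) * ⟪x,h⟫) ≤ R^(2*q+1) * t := by
    have h1 : -⟪x,h⟫ ≤ s * t := by
      have h2 := abs_real_inner_le_norm x h
      have h3 := neg_abs_le ⟪x,h⟫
      rw [← hs, ← htd] at h2
      linarith
    have h4 : -(s ^ (2*q) * ⟪x,h⟫) = s^(2*q) * (-⟪x,h⟫) := by ring
    rw [h4]
    calc s^(2*q) * (-⟪x,h⟫) ≤ s^(2*q) * (s*t) := by
          apply mul_le_mul_of_nonneg_left h1 (by positivity)
    _ = s^(2*q+1) * t := by ring
    _ ≤ R^(2*q+1) * t := by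
          apply mul_le_mul_of_nonneg_right (pow_le_pow_left₀ hs0 hx _) ht
  show ‖x + h‖ ^ (2*q+2) / D - s ^ (2*q+2) / D - s ^ (2*q) * ⟪x, h⟫
        ≤ (2 : ℝ) ^ (2 * q) / D * t ^ (2 * q + 2)
          + (2 : ℝ) ^ (3 * q + 1) / D * R ^ (q + 1) * t ^ (q + 1)
          + R ^ (2*q+1) * t
          + (2 : ℝ) ^ q / D * R ^ (2 * q + 2)
  have h5 : ‖x + h‖ ^ (2*q+2) / D ≤ (2^(2*q) * t^(2*q+2) + 2^(3*q+1)*R^(q+1)*t^(q+1)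
      + 2^q * R^(2*q+2)) / D := by
    gcongr
  have h6 : (0:ℝ) ≤ s ^ (2*q+2) / D := by positivity
  have e1 : (2^(2*q) * t^(2*q+2) + 2^(3*q+1)*R^(q+1)*t^(q+1) + 2^q * R^(2*q+2)) / D
      = (2 : ℝ) ^ (2 * q) / D * t ^ (2 * q + 2)
        + (2 : ℝ) ^ (3 * q + 1) / D * R ^ (q + 1) * t ^ (q + 1)
        + (2 : ℝ) ^ q / D * R ^ (2 * q + 2) := by ring
  rw [e1] at h5
  linarith
end

section
/- Let q ≥ 1 be an integer, p = 2q, and R > 0. Then for all x, h ∈ E with ‖x‖ ≤ R: β_{d_{p+1}}(x, x + h) ≤ 2^{2q−1}·‖h‖^{2q+1} + (2^{(6q−1)/2}/(p+1))·R^{(2q+1)/2}·‖h‖^{(2q+1)/2} + R^{p}·‖h‖ + (2^{(2q−1)/2}/(p+1))·R^{2q+1}. -/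
open scoped RealInnerProductSpace

lemma two_term_aux {a b : ℝ} (ha : 0 ≤ a) (hb : 0 ≤ b) {r : ℝ} (hr : 1 ≤ r) :
    (a + b) ^ r ≤ 2 ^ (r - 1) * (a ^ r + b ^ r) := by
  have h := NNReal.rpow_add_le_mul_rpow_add_rpow a.toNNReal b.toNNReal hr
  have := NNReal.coe_le_coe.2 h
  push_cast [Real.coe_toNNReal a ha, Real.coe_toNNReal b hb] at this
  convert this using 2

lemma pow_diff_mono_aux (s : ℝ) (hs : 0 ≤ s) :
    ∀ n : ℕ, ∀ x R : ℝ, 0 ≤ x → x ≤ R →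
      (x + s) ^ n - x ^ n ≤ (R + s) ^ n - R ^ n := by
  intro n
  induction n with
  | zero => intro x R _ _; simp
  | succ n ih =>
    intro x R hx hxR
    have h1 := ih x R hx hxR
    have h2 : (x + s) ^ n ≤ (R + s) ^ n := pow_le_pow_left₀ (by linarith) (by linarith) n
    have h3 : x ^ n ≤ (x + s) ^ n := pow_le_pow_left₀ hx (by linarith) n
    have e1 : (x + s) ^ (n + 1) - x ^ (n + 1)
        = x * ((x + s) ^ n - x ^ n) + s * (x + s) ^ n := by ring
    have e2 : (R + s) ^ (n + 1) - R ^ (n + 1)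
        = R * ((R + s) ^ n - R ^ n) + s * (R + s) ^ n := by ring
    rw [e1, e2]
    have hA : x * ((x + s) ^ n - x ^ n) ≤ R * ((R + s) ^ n - R ^ n) :=
      mul_le_mul hxR h1 (sub_nonneg.2 h3) (hx.trans hxR)
    have hB : s * (x + s) ^ n ≤ s * (R + s) ^ n := mul_le_mul_of_nonneg_left h2 hs
    linarith

theorem stmt17 {E : Type*} [NormedAddCommGroup E] [InnerProductSpace ℝ E]
    [FiniteDimensional ℝ E]
    (q : ℕ) (hq : 1 ≤ q) (p : ℕ) (hp : p = 2 * q)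
    (R : ℝ) (hR : 0 < R) :
    ∀ x h : E, ‖x‖ ≤ R →
      ‖x + h‖ ^ (p + 1) / (p + 1 : ℝ) - ‖x‖ ^ (p + 1) / (p + 1 : ℝ)
          - ‖x‖ ^ (p - 1) * ⟪x, h⟫
        ≤ (2 : ℝ) ^ (2 * q - 1) * ‖h‖ ^ (2 * q + 1)
          + (2 : ℝ) ^ ((6 * (q : ℝ) - 1) / 2) / (p + 1 : ℝ) *
              R ^ ((2 * (q : ℝ) + 1) / 2) * ‖h‖ ^ ((2 * (q : ℝ) + 1) / 2)
          + R ^ p * ‖h‖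
          + (2 : ℝ) ^ ((2 * (q : ℝ) - 1) / 2) / (p + 1 : ℝ) * R ^ (2 * q + 1) := by
  subst hp
  intro x h hx
  set a := ‖x‖ with ha_def
  set s := ‖h‖ with hs_def
  have ha : 0 ≤ a := norm_nonneg x
  have hs : 0 ≤ s := norm_nonneg h
  have hRnn : 0 ≤ R := hR.le
  have hq1 : (1 : ℝ) ≤ (q : ℝ) := by exact_mod_cast hq
  set r : ℝ := (2 * (q : ℝ) + 1) / 2 with hr_def
  have hr : (1 : ℝ) ≤ r := by rw [hr_def]; linarith
  set N : ℝ := (2 * q : ℕ) + 1 with hN_def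
  have hN : (3 : ℝ) ≤ N := by
    rw [hN_def]; push_cast; linarith
  have hN0 : (0 : ℝ) < N := by linarith
  -- Cauchy-Schwarz step
  have hcs : -(a ^ (2 * q - 1) * ⟪x, h⟫) ≤ R ^ (2 * q) * s := by
    have h1 : -(a * s) ≤ ⟪x, h⟫ := by
      have := abs_real_inner_le_norm x h
      have h2 := neg_abs_le (⟪x, h⟫ : ℝ)
      linarith
    have h2 : -(a ^ (2 * q - 1) * ⟪x, h⟫) ≤ a ^ (2 * q - 1) * (a * s) := by
      have hpow : (0:ℝ) ≤ a ^ (2 * q - 1) := pow_nonneg ha _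
      nlinarith [mul_le_mul_of_nonneg_left h1 hpow]
    have h3 : a ^ (2 * q - 1) * (a * s) = a ^ (2 * q) * s := by
      rw [← mul_assoc, ← pow_succ]
      congr 2
      omega
    have h4 : a ^ (2 * q) * s ≤ R ^ (2 * q) * s :=
      mul_le_mul_of_nonneg_right (pow_le_pow_left₀ ha hx _) hs
    linarith [h2.trans_eq h3]
  -- norm bound
  have hnb : ‖x + h‖ ^ (2 * q + 1) ≤ (a + s) ^ (2 * q + 1) :=
    pow_le_pow_left₀ (norm_nonneg _) (norm_add_le x h) _
  -- monotone difference
  have hmono : (a + s) ^ (2 * q + 1) - a ^ (2 * q + 1)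
      ≤ (R + s) ^ (2 * q + 1) - R ^ (2 * q + 1) :=
    pow_diff_mono_aux s hs (2 * q + 1) a R ha hx
  -- key power-mean bound
  have hsq : ∀ y : ℝ, 0 ≤ y → (y * y) ^ r = y ^ (2 * q + 1) := by
    intro y hy
    have h1 : y * y = y ^ (2 : ℕ) := by ring
    rw [h1, ← Real.rpow_natCast_mul hy 2 r]
    have h2 : ((2 : ℕ) : ℝ) * r = ((2 * q + 1 : ℕ) : ℝ) := by
      rw [hr_def]; push_cast; ring
    rw [h2, Real.rpow_natCast]
  have hRs : (0:ℝ) ≤ R + s := by linarith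
  have hexp : (R + s) ^ (2 * q + 1) = (R * R + (2 * R * s + s * s)) ^ r := by
    rw [show R * R + (2 * R * s + s * s) = (R + s) * (R + s) by ring]
    exact (hsq (R + s) hRs).symm
  have hB : (0:ℝ) ≤ 2 * R * s + s * s := by positivity
  have h1 : (R * R + (2 * R * s + s * s)) ^ r
      ≤ 2 ^ (r - 1) * ((R * R) ^ r + (2 * R * s + s * s) ^ r) :=
    two_term_aux (by positivity) hB hr
  have h2 : (2 * R * s + s * s) ^ r ≤ 2 ^ (r - 1) * ((2 * R * s) ^ r + (s * s) ^ r) :=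
    two_term_aux (by positivity) (by positivity) hr
  have hA : (R * R) ^ r = R ^ (2 * q + 1) := hsq R hRnn
  have hC : (s * s) ^ r = s ^ (2 * q + 1) := hsq s hs
  have hBr : (2 * R * s) ^ r = 2 ^ r * (R ^ r * s ^ r) := by
    rw [show 2 * R * s = 2 * (R * s) by ring, Real.mul_rpow (by norm_num) (by positivity),
      Real.mul_rpow hRnn hs]
  have hkey : (R + s) ^ (2 * q + 1)
      ≤ 2 ^ (r - 1) * R ^ (2 * q + 1)
        + (2 ^ (r - 1) * 2 ^ (r - 1) * 2 ^ r) * (R ^ r * s ^ r)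
        + (2 ^ (r - 1) * 2 ^ (r - 1)) * s ^ (2 * q + 1) := by
    rw [hexp]
    calc (R * R + (2 * R * s + s * s)) ^ r
        ≤ 2 ^ (r - 1) * ((R * R) ^ r + (2 * R * s + s * s) ^ r) := h1
      _ ≤ 2 ^ (r - 1) * ((R * R) ^ r + 2 ^ (r - 1) * ((2 * R * s) ^ r + (s * s) ^ r)) := by
          have h2pos : (0:ℝ) ≤ (2:ℝ) ^ (r - 1) := (Real.rpow_pos_of_pos (by norm_num) _).le
          nlinarith [h2]
      _ = 2 ^ (r - 1) * R ^ (2 * q + 1)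
          + (2 ^ (r - 1) * 2 ^ (r - 1) * 2 ^ r) * (R ^ r * s ^ r)
          + (2 ^ (r - 1) * 2 ^ (r - 1)) * s ^ (2 * q + 1) := by
          rw [hA, hC, hBr]; ring
  -- identify the coefficients
  have hc1 : (2:ℝ) ^ (r - 1) = (2:ℝ) ^ ((2 * (q : ℝ) - 1) / 2) := by
    congr 1; rw [hr_def]; ring
  have hc2 : (2:ℝ) ^ (r - 1) * 2 ^ (r - 1) * 2 ^ r = (2:ℝ) ^ ((6 * (q : ℝ) - 1) / 2) := by
    rw [← Real.rpow_add (by norm_num), ← Real.rpow_add (by norm_num)]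
    congr 1; rw [hr_def]; ring
  have hc3 : (2:ℝ) ^ (r - 1) * 2 ^ (r - 1) = (2:ℝ) ^ (2 * q - 1) := by
    rw [← Real.rpow_add (by norm_num)]
    have : (r - 1) + (r - 1) = ((2 * q - 1 : ℕ) : ℝ) := by
      rw [hr_def, Nat.cast_sub (by omega)]; push_cast; ring
    rw [this, Real.rpow_natCast]
  rw [hc2, hc3, hc1] at hkey
  -- final assembly
  set c1 : ℝ := (2:ℝ) ^ ((2 * (q : ℝ) - 1) / 2) with hc1_def
  set c2 : ℝ := (2:ℝ) ^ ((6 * (q : ℝ) - 1) / 2) with hc2_def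
  set c3 : ℝ := (2:ℝ) ^ (2 * q - 1) with hc3_def
  have hc1p : (0:ℝ) < c1 := Real.rpow_pos_of_pos (by norm_num) _
  have hc2p : (0:ℝ) < c2 := Real.rpow_pos_of_pos (by norm_num) _
  have hc3p : (0:ℝ) < c3 := by positivity
  have hrs : (0:ℝ) ≤ R ^ r * s ^ r := by positivity
  have hstep : ‖x + h‖ ^ (2 * q + 1) / N - a ^ (2 * q + 1) / N
      ≤ ((R + s) ^ (2 * q + 1) - R ^ (2 * q + 1)) / N := by
    rw [div_sub_div_same]
    gcongr ?_ / N
    linarith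
  have hstep2 : ((R + s) ^ (2 * q + 1) - R ^ (2 * q + 1)) / N
      ≤ c3 * s ^ (2 * q + 1) + c2 / N * (R ^ r * s ^ r) + c1 / N * R ^ (2 * q + 1) := by
    rw [div_le_iff₀ hN0]
    have hRp : (0:ℝ) ≤ R ^ (2 * q + 1) := by positivity
    have hsp : (0:ℝ) ≤ s ^ (2 * q + 1) := by positivity
    have e : (c3 * s ^ (2 * q + 1) + c2 / N * (R ^ r * s ^ r) + c1 / N * R ^ (2 * q + 1)) * N
        = N * (c3 * s ^ (2 * q + 1)) + c2 * (R ^ r * s ^ r) + c1 * R ^ (2 * q + 1) := by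
      field_simp
    rw [e]
    have h5 : c3 * s ^ (2 * q + 1) ≤ N * (c3 * s ^ (2 * q + 1)) :=
      le_mul_of_one_le_left (by positivity) (by linarith)
    linarith [hkey, h5, hRp]
  have hgoal : ‖x + h‖ ^ (2 * q + 1) / N - a ^ (2 * q + 1) / N - a ^ (2 * q - 1) * ⟪x, h⟫
      ≤ c3 * s ^ (2 * q + 1) + c2 / N * (R ^ r * s ^ r) + R ^ (2 * q) * s
        + c1 / N * R ^ (2 * q + 1) := by
    linarith [hstep.trans hstep2, hcs]
  calc ‖x + h‖ ^ (2 * q + 1) / (((2 * q : ℕ) : ℝ) + 1) - a ^ (2 * q + 1) / (((2 * q : ℕ) : ℝ) + 1)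
      - a ^ (2 * q - 1) * ⟪x, h⟫
      = ‖x + h‖ ^ (2 * q + 1) / N - a ^ (2 * q + 1) / N - a ^ (2 * q - 1) * ⟪x, h⟫ := by
        rw [hN_def]
    _ ≤ c3 * s ^ (2 * q + 1) + c2 / N * (R ^ r * s ^ r) + R ^ (2 * q) * s
        + c1 / N * R ^ (2 * q + 1) := hgoal
    _ = c3 * s ^ (2 * q + 1) + c2 / N * R ^ r * s ^ r + R ^ (2 * q) * s
        + c1 / N * R ^ (2 * q + 1) := by ring
end

section
/- Let p ≥ 1 be an integer, c > 0, and define A_k = (c/2)^p·(k/(p+1))^{p+1} for k ≥ 0. Then for every k ≥ 0: (A_{k+1} − A_k)^{(p+1)/p} ≤ (c/2)·A_{k+1}. -/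
/-!
Write `a = c / 2` and `x_k = k / (p + 1)`, so that `A_k = a ^ p * x_k ^ (p + 1)`. Since
`x_{k+1} - x_k = 1 / (p + 1)`, the mean value bound `x ^ (p+1) - y ^ (p+1) ≤ (p+1) x ^ p (x - y)`
gives `A_{k+1} - A_k ≤ (a x_{k+1}) ^ p`, and raising to the power `(p + 1) / p` turns the right-hand
side into `(a x_{k+1}) ^ (p + 1) = a A_{k+1}`.
-/

theorem pow_succ_sub_pow_succ_le {α : Type*} [CommRing α] [LinearOrder α] [IsStrictOrderedRing α]
    {x y : α} (hy : 0 ≤ y) (hyx : y ≤ x) (n : ℕ) :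
    x ^ (n + 1) - y ^ (n + 1) ≤ (n + 1) * x ^ n * (x - y) := by
  have hmax : max |x| |y| = x := by
    rw [abs_of_nonneg hy, abs_of_nonneg (hy.trans hyx), max_eq_left hyx]
  calc x ^ (n + 1) - y ^ (n + 1) ≤ |x ^ (n + 1) - y ^ (n + 1)| := le_abs_self _
    _ ≤ |x - y| * ↑(n + 1) * max |x| |y| ^ (n + 1 - 1) := abs_pow_sub_pow_le x y (n + 1)
    _ = (n + 1) * x ^ n * (x - y) := by
      rw [hmax, abs_of_nonneg (sub_nonneg.mpr hyx), Nat.add_sub_cancel]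
      push_cast
      ring

theorem Real.pow_rpow_succ_div_self {z : ℝ} (hz : 0 ≤ z) {n : ℕ} (hn : n ≠ 0) :
    (z ^ n) ^ (((n : ℝ) + 1) / n) = z ^ (n + 1) := by
  rw [← Real.rpow_natCast_mul hz, mul_div_cancel₀ _ (Nat.cast_ne_zero.mpr hn)]
  exact_mod_cast Real.rpow_natCast z (n + 1)

theorem mul_pow_succ_div_sub_le {a : ℝ} (ha : 0 ≤ a) (p k : ℕ) :
    a ^ p * (((k : ℝ) + 1) / (p + 1)) ^ (p + 1) - a ^ p * ((k : ℝ) / (p + 1)) ^ (p + 1)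
      ≤ (a * (((k : ℝ) + 1) / (p + 1))) ^ p := by
  have hstep : ((k : ℝ) + 1) / (p + 1) - (k : ℝ) / (p + 1) = 1 / (p + 1) := by ring
  have hmono : (k : ℝ) / (p + 1) ≤ ((k : ℝ) + 1) / (p + 1) := by gcongr; linarith
  have hmvt := pow_succ_sub_pow_succ_le (by positivity) hmono p
  rw [hstep, mul_right_comm, mul_one_div_cancel (by positivity), one_mul] at hmvt
  rw [← mul_sub, mul_pow]
  gcongr

theorem stmt19 (p : ℕ) (hp : 1 ≤ p) (c : ℝ) (hc : 0 < c)
    (A : ℕ → ℝ)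
    (hA : ∀ k : ℕ, A k = (c / 2) ^ p * ((k : ℝ) / (p + 1)) ^ (p + 1)) :
    ∀ k : ℕ, (A (k + 1) - A k) ^ (((p : ℝ) + 1) / p) ≤ c / 2 * A (k + 1) := by
  intro k
  have ha : 0 ≤ c / 2 := by positivity
  have hA_succ : A (k + 1) = (c / 2) ^ p * (((k : ℝ) + 1) / (p + 1)) ^ (p + 1) := by
    rw [hA]; push_cast; rfl
  have hdiff_nonneg : 0 ≤ A (k + 1) - A k := by
    rw [hA_succ, hA, sub_nonneg]
    gcongr
    linarith
  have hdiff_le : A (k + 1) - A k ≤ (c / 2 * (((k : ℝ) + 1) / (p + 1))) ^ p := by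
    rw [hA_succ, hA]
    exact mul_pow_succ_div_sub_le ha p k
  calc (A (k + 1) - A k) ^ (((p : ℝ) + 1) / p)
      ≤ ((c / 2 * (((k : ℝ) + 1) / (p + 1))) ^ p) ^ (((p : ℝ) + 1) / p) :=
        Real.rpow_le_rpow hdiff_nonneg hdiff_le (by positivity)
    _ = (c / 2 * (((k : ℝ) + 1) / (p + 1))) ^ (p + 1) :=
        Real.pow_rpow_succ_div_self (by positivity) (by omega)
    _ = c / 2 * A (k + 1) := by rw [hA_succ, mul_pow]; ring
end
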